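/- Let (X,f) be a zero-dimensional system (X a nonempty compact metrizable totally disconnected space, f a homeomorphism) that is densely aperiodic. Then there exists a minimal basic set B with empty interior (continuously decisive) such that |M ∩ B| = 1 for every minimal set M. -/

import Mathlib

open Set

/-- The full orbit `{fⁿ(x) : n ∈ ℤ}` of a point under a homeomorphism. -/
def orbitZ {X : Type*} [TopologicalSpace X] (f : X ≃ₜ X) (x : X) : Set X :=
  {y | ∃ n : ℤ, (f.toEquiv ^ n) x = y}

/-- `O(A) = ⋃_{n ∈ ℤ} fⁿ(A)`. -/
def orbitSetZ {X : Type*} [TopologicalSpace X] (f : X ≃ₜ X) (A : Set X) : Set X :=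
  ⋃ n : ℤ, (f.toEquiv ^ n) '' A

/-- `O⁺(A) = ⋃_{n ≥ 0} fⁿ(A)`. -/
def orbitSetP {X : Type*} [TopologicalSpace X] (f : X ≃ₜ X) (A : Set X) : Set X :=
  ⋃ n : ℕ, (f.toEquiv ^ (n : ℤ)) '' A

/-- `O⁻(A) = ⋃_{n ≤ 0} fⁿ(A)`. -/
def orbitSetN {X : Type*} [TopologicalSpace X] (f : X ≃ₜ X) (A : Set X) : Set X :=
  ⋃ n : ℕ, (f.toEquiv ^ (-(n : ℤ))) '' A

/-- The ω-limit set of a point. -/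
def omegaSet {X : Type*} [TopologicalSpace X] (f : X ≃ₜ X) (x : X) : Set X :=
  ⋂ n : ℕ, closure {y | ∃ m : ℕ, n ≤ m ∧ (f.toEquiv ^ (m : ℤ)) x = y}

/-- The α-limit set of a point. -/
def alphaSet {X : Type*} [TopologicalSpace X] (f : X ≃ₜ X) (x : X) : Set X :=
  ⋂ n : ℕ, closure {y | ∃ m : ℕ, n ≤ m ∧ (f.toEquiv ^ (-(m : ℤ))) x = y}

/-- A minimal set: nonempty, closed, invariant, and every orbit in it is dense in it. -/
def IsMinimalSet {X : Type*} [TopologicalSpace X] (f : X ≃ₜ X) (M : Set X) : Prop :=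
  M.Nonempty ∧ IsClosed M ∧ f '' M = M ∧ ∀ x ∈ M, M ⊆ closure (orbitZ f x)

/-- `M_f`: the closure of the union of all minimal sets. -/
def minimalUnion {X : Type*} [TopologicalSpace X] (f : X ≃ₜ X) : Set X :=
  closure (⋃₀ {M | IsMinimalSet f M})

/-- A wandering point. -/
def IsWandering {X : Type*} [TopologicalSpace X] (f : X ≃ₜ X) (x : X) : Prop :=
  ∃ U : Set X, IsOpen U ∧ x ∈ U ∧ ∀ n : ℤ, n ≠ 0 → (f.toEquiv ^ n) '' U ∩ U = ∅

/-- `Ω_f`: the set of non-wandering points. -/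
def nonWandering {X : Type*} [TopologicalSpace X] (f : X ≃ₜ X) : Set X :=
  {x | ¬ IsWandering f x}

/-- A quasi-section: a closed set every open neighborhood of which has full orbit. -/
def IsQuasiSection {X : Type*} [TopologicalSpace X] (f : X ≃ₜ X) (A : Set X) : Prop :=
  IsClosed A ∧ ∀ U : Set X, IsOpen U → A ⊆ U → orbitSetZ f U = Set.univ

/-- A minimal quasi-section (minimal w.r.t. inclusion among quasi-sections). -/
def IsMinimalQuasiSection {X : Type*} [TopologicalSpace X] (f : X ≃ₜ X) (A : Set X) : Prop :=
  IsQuasiSection f A ∧ ∀ B : Set X, IsQuasiSection f B → B ⊆ A → B = A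

/-- A basic set: a quasi-section meeting every orbit in at most one point. -/
def IsBasicSet {X : Type*} [TopologicalSpace X] (f : X ≃ₜ X) (A : Set X) : Prop :=
  IsQuasiSection f A ∧ ∀ x : X, (orbitZ f x ∩ A).Subsingleton

/-- A minimal basic set (minimal w.r.t. inclusion among basic sets). -/
def IsMinimalBasicSet {X : Type*} [TopologicalSpace X] (f : X ≃ₜ X) (A : Set X) : Prop :=
  IsBasicSet f A ∧ ∀ B : Set X, IsBasicSet f B → B ⊆ A → B = A

/-- Densely aperiodic: the points with infinite orbit are dense. -/
def DenselyAperiodic {X : Type*} [TopologicalSpace X] (f : X ≃ₜ X) : Prop :=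
  Dense {x : X | (orbitZ f x).Infinite}

/-!
Fix a continuous injection `φ : X → ℝ` (a zero-dimensional compact metrizable space embeds in
the Cantor set) and let `B` be the closure of the set of points at which `φ` attains its minimum
on some minimal set. Every point of `B` minimises `φ` along its own orbit, a closed condition, so
by injectivity `B` meets each orbit at most once and each minimal set `M` exactly in the
minimiser of `φ` on `M`. A closed set is a quasi-section iff it meets every minimal set, so `B` is
a basic set, and a quasi-section contained in `B` must contain all these minimisers, so `B` is
minimal. If `B` had an interior point, then, `B` being the closure of the minimisers, some
minimiser `p` of a minimal set `M` would lie in `V = interior B`; then `p` is isolated in `M`,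
which forces `M`, hence the orbit of `p`, to be finite, so `fⁿ p = p ∈ V` for some `n ≠ 0`. But
`V ∩ f⁻ⁿ V` is empty: an aperiodic point `w` in it would give two distinct points `w`, `fⁿ w` of
`B` on one orbit.
-/

open Function

namespace Homeomorph

variable {X : Type*} [TopologicalSpace X]

theorem toEquiv_zpow (f : X ≃ₜ X) (n : ℤ) : (f ^ n).toEquiv = f.toEquiv ^ n :=
  map_zpow (⟨⟨toEquiv, rfl⟩, fun _ _ ↦ rfl⟩ : (X ≃ₜ X) →* Equiv.Perm X) f n

@[simp]
theorem toEquiv_zpow_apply (f : X ≃ₜ X) (n : ℤ) (x : X) : (f.toEquiv ^ n) x = (f ^ n) x := by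
  rw [← toEquiv_zpow, coe_toEquiv]

theorem zpow_apply_zpow_apply (f : X ≃ₜ X) (m n : ℤ) (x : X) :
    (f ^ m) ((f ^ n) x) = (f ^ (m + n)) x := by
  rw [zpow_add, mul_apply]

@[simp]
theorem zpow_neg_apply_zpow_apply (f : X ≃ₜ X) (n : ℤ) (x : X) : (f ^ (-n)) ((f ^ n) x) = x := by
  rw [zpow_neg, inv_apply, symm_apply_apply]

theorem zpow_zpow_apply_eq_self {f : X ≃ₜ X} {n : ℤ} {x : X} (h : (f ^ n) x = x) (q : ℤ) :
    ((f ^ n) ^ q) x = x := by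
  rw [← coe_toEquiv, toEquiv_zpow]
  exact Equiv.Perm.zpow_apply_eq_self_of_apply_eq_self h q

end Homeomorph

open Homeomorph

section Dynamics

variable {X : Type*} [TopologicalSpace X] {f : X ≃ₜ X}

theorem mem_orbitZ {x y : X} : y ∈ orbitZ f x ↔ ∃ n : ℤ, (f ^ n) x = y := by
  simp [orbitZ]

theorem mem_orbitZ_self (x : X) : x ∈ orbitZ f x := mem_orbitZ.mpr ⟨0, rfl⟩

theorem mem_orbitSetZ {U : Set X} {x : X} : x ∈ orbitSetZ f U ↔ ∃ n : ℤ, (f ^ n) x ∈ U := by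
  simp only [orbitSetZ, mem_iUnion, mem_image, toEquiv_zpow_apply]
  constructor
  · rintro ⟨n, u, hu, rfl⟩
    exact ⟨-n, by rwa [zpow_neg_apply_zpow_apply]⟩
  · rintro ⟨n, hn⟩
    exact ⟨-n, _, hn, by simp⟩

theorem orbitZ_finite_iff {x : X} : (orbitZ f x).Finite ↔ ∃ n : ℤ, n ≠ 0 ∧ (f ^ n) x = x := by
  have horbit : orbitZ f x = range fun n : ℤ ↦ (f ^ n) x := by ext; simp [mem_orbitZ]
  constructor
  · intro hfin
    rw [horbit] at hfin
    obtain ⟨a, b, hab, hab'⟩ : ∃ a b : ℤ, a ≠ b ∧ (f ^ a) x = (f ^ b) x := by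
      by_contra! h
      exact infinite_range_of_injective (fun a b hab ↦ by_contra fun hne ↦ h a b hne hab) hfin
    refine ⟨a - b, sub_ne_zero.mpr hab, ?_⟩
    rw [sub_eq_neg_add, ← zpow_apply_zpow_apply, hab', zpow_neg_apply_zpow_apply]
  · rintro ⟨n, hn, hx⟩
    have hsub : orbitZ f x ⊆ (fun k : ℤ ↦ (f ^ k) x) '' Ico 0 |n| := by
      rintro _ ⟨k, rfl⟩
      refine ⟨k % n, ⟨Int.emod_nonneg k hn, Int.emod_lt_abs k hn⟩, ?_⟩
      simp only [toEquiv_zpow_apply]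
      conv_rhs => rw [← Int.emod_add_mul_ediv k n, ← zpow_apply_zpow_apply, zpow_mul,
        zpow_zpow_apply_eq_self hx]
    exact ((finite_Ico _ _).image _).subset hsub

theorem isInvariant_zpow_of_image_eq {A : Set X} (h : f '' A = A) :
    IsInvariant (fun n : ℤ ↦ ⇑(f ^ n)) A := by
  have hinv : MapsTo f.symm A A := by
    intro x hx
    rw [← h] at hx
    obtain ⟨a, ha, rfl⟩ := hx
    rwa [symm_apply_apply]
  intro n
  dsimp only
  induction n using Int.induction_on with
  | zero => exact fun x hx ↦ by simpa using hx
  | succ n ih =>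
    exact fun x hx ↦ by rw [zpow_add_one, mul_apply]; exact ih (h ▸ mapsTo_image f A hx)
  | pred n ih => exact fun x hx ↦ by rw [zpow_sub_one, mul_apply]; exact ih (hinv hx)

theorem image_eq_of_isInvariant_zpow {A : Set X} (h : IsInvariant (fun n : ℤ ↦ ⇑(f ^ n)) A) :
    f '' A = A := by
  refine (mapsTo_iff_image_subset.mp (by simpa using h 1)).antisymm fun x hx ↦ ?_
  exact ⟨f.symm x, by simpa using h (-1) hx, apply_symm_apply f x⟩

theorem IsInvariant.orbitZ_subset {A : Set X} (h : IsInvariant (fun n : ℤ ↦ ⇑(f ^ n)) A)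
    {x : X} (hx : x ∈ A) : orbitZ f x ⊆ A := by
  rintro _ ⟨n, rfl⟩
  simpa using h n hx

theorem isInvariant_closure_orbitZ (x : X) :
    IsInvariant (fun n : ℤ ↦ ⇑(f ^ n)) (closure (orbitZ f x)) := by
  refine fun n ↦ MapsTo.closure (fun y hy ↦ ?_) (f ^ n).continuous
  obtain ⟨m, rfl⟩ := mem_orbitZ.mp hy
  exact mem_orbitZ.mpr ⟨n + m, (zpow_apply_zpow_apply f n m x).symm⟩

theorem IsMinimalSet.isInvariant {M : Set X} (hM : IsMinimalSet f M) :
    IsInvariant (fun n : ℤ ↦ ⇑(f ^ n)) M :=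
  isInvariant_zpow_of_image_eq hM.2.2.1

theorem IsClosed.exists_isMinimalSet_subset [CompactSpace X] {C : Set X} (hC : IsClosed C)
    (hne : C.Nonempty) (hinv : IsInvariant (fun n : ℤ ↦ ⇑(f ^ n)) C) :
    ∃ M, IsMinimalSet f M ∧ M ⊆ C := by
  let S : Set (Set X) := {A | A.Nonempty ∧ IsClosed A ∧ IsInvariant (fun n : ℤ ↦ ⇑(f ^ n)) A}
  have hchain : ∀ c ⊆ S, IsChain (· ⊆ ·) c → c.Nonempty → ∃ lb ∈ S, ∀ B ∈ c, lb ⊆ B := by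
    intro c hcS hc hcne
    have : Nonempty c := hcne.to_subtype
    refine ⟨⋂₀ c, ⟨?_, isClosed_sInter fun B hB ↦ (hcS hB).2.1,
      fun n x hx B hB ↦ (hcS hB).2.2 n (hx B hB)⟩, fun B hB ↦ sInter_subset_of_mem hB⟩
    exact IsCompact.nonempty_sInter_of_directed_nonempty_isCompact_isClosed
      (fun a ha b hb ↦ (hc.total ha hb).elim (fun h ↦ ⟨a, ha, subset_rfl, h⟩)
        fun h ↦ ⟨b, hb, h, subset_rfl⟩)
      (fun B hB ↦ (hcS hB).1) (fun B hB ↦ (hcS hB).2.1.isCompact) fun B hB ↦ (hcS hB).2.1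
  obtain ⟨M, hMC, ⟨hne, hcl, hinv⟩, hmin⟩ := zorn_superset_nonempty S hchain C ⟨hne, hC, hinv⟩
  refine ⟨M, ⟨hne, hcl, image_eq_of_isInvariant_zpow hinv, fun x hx ↦ ?_⟩, hMC⟩
  exact hmin ⟨⟨x, subset_closure (mem_orbitZ_self x)⟩, isClosed_closure,
    isInvariant_closure_orbitZ x⟩ (closure_minimal (hinv.orbitZ_subset hx) hcl)

theorem IsQuasiSection.inter_nonempty {A M : Set X} (hA : IsQuasiSection f A)
    (hM : IsMinimalSet f M) : (M ∩ A).Nonempty := by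
  by_contra h
  obtain ⟨y, hy⟩ := hM.1
  obtain ⟨n, hn⟩ := mem_orbitSetZ.mp
    ((hA.2 Mᶜ hM.2.1.isOpen_compl fun a ha haM ↦ h ⟨a, haM, ha⟩).symm ▸ mem_univ y)
  exact hn (hM.isInvariant n hy)

theorem isQuasiSection_iff [CompactSpace X] {A : Set X} (hA : IsClosed A) :
    IsQuasiSection f A ↔ ∀ M, IsMinimalSet f M → (M ∩ A).Nonempty := by
  refine ⟨fun h M hM ↦ h.inter_nonempty hM, fun h ↦ ⟨hA, fun U hU hAU ↦ ?_⟩⟩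
  refine eq_univ_of_forall fun x ↦ ?_
  obtain ⟨M, hM, hMx⟩ := isClosed_closure.exists_isMinimalSet_subset
    ⟨x, subset_closure (mem_orbitZ_self x)⟩ (isInvariant_closure_orbitZ (f := f) x)
  obtain ⟨p, hpM, hpA⟩ := h M hM
  obtain ⟨_, hyU, n, rfl⟩ := mem_closure_iff.mp (hMx hpM) U hU (hAU hpA)
  exact mem_orbitSetZ.mpr ⟨n, by simpa using hyU⟩

theorem IsMinimalSet.finite_of_inter_eq_singleton [CompactSpace X] {M V : Set X} {y : X}
    (hM : IsMinimalSet f M) (hV : IsOpen V) (hMV : M ∩ V = {y}) : M.Finite := by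
  obtain ⟨hyM, hyV⟩ : y ∈ M ∩ V := hMV ▸ mem_singleton y
  obtain ⟨t, ht⟩ := hM.2.1.isCompact.elim_finite_subcover (fun n : ℤ ↦ (f ^ n) ⁻¹' V)
    (fun n ↦ hV.preimage (f ^ n).continuous) fun z hz ↦ by
      obtain ⟨_, hwV, n, rfl⟩ := mem_closure_iff.mp (hM.2.2.2 z hz hyM) V hV hyV
      exact mem_iUnion.mpr ⟨n, by simpa using hwV⟩
  refine ((t.finite_toSet.image fun n : ℤ ↦ (f ^ (-n)) y)).subset fun z hz ↦ ?_
  obtain ⟨n, hn, hzn⟩ := mem_iUnion₂.mp (ht hz)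
  have hzy : (f ^ n) z ∈ M ∩ V := ⟨hM.isInvariant n hz, hzn⟩
  rw [hMV, mem_singleton_iff] at hzy
  refine ⟨n, hn, ?_⟩
  change (f ^ (-n)) y = z
  rw [← hzy, zpow_neg_apply_zpow_apply]

theorem DenselyAperiodic.interior_inter_preimage_eq_empty (hf : DenselyAperiodic f) {B : Set X}
    (hB : ∀ x, (orbitZ f x ∩ B).Subsingleton) {n : ℤ} (hn : n ≠ 0) :
    interior B ∩ (f ^ n) ⁻¹' interior B = ∅ := by
  by_contra hne
  obtain ⟨w, hwU, hw⟩ := hf.inter_open_nonempty _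
    (isOpen_interior.inter (isOpen_interior.preimage (f ^ n).continuous))
    (nonempty_iff_ne_empty.mpr hne)
  have hfix : (f ^ n) w = w := hB w ⟨mem_orbitZ.mpr ⟨n, rfl⟩, interior_subset hwU.2⟩
    ⟨mem_orbitZ_self w, interior_subset hwU.1⟩
  exact hw (orbitZ_finite_iff.mpr ⟨n, hn, hfix⟩)

section Minimizers

variable {β : Type*} [LinearOrder β] {φ : X → β}

variable (f φ) in
def orbitMinimizers : Set X := {z | ∀ n : ℤ, φ z ≤ φ ((f ^ n) z)}

variable (f φ) in
def minimalSetMinimizers : Set X := {p | ∃ M, IsMinimalSet f M ∧ p ∈ M ∧ IsMinOn φ M p}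

theorem orbitZ_inter_orbitMinimizers_subsingleton (hφ : Injective φ) (x : X) :
    (orbitZ f x ∩ orbitMinimizers f φ).Subsingleton := by
  rintro _ ⟨ha, hza⟩ _ ⟨hb, hzb⟩
  obtain ⟨a, rfl⟩ := mem_orbitZ.mp ha
  obtain ⟨b, rfl⟩ := mem_orbitZ.mp hb
  refine hφ (le_antisymm ?_ ?_)
  · simpa [zpow_apply_zpow_apply] using hza (b - a)
  · simpa [zpow_apply_zpow_apply] using hzb (a - b)

variable [TopologicalSpace β] [OrderClosedTopology β]

theorem isClosed_orbitMinimizers (hφ : Continuous φ) : IsClosed (orbitMinimizers f φ) := by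
  rw [orbitMinimizers, ofPred_forall]
  exact isClosed_iInter fun n ↦ isClosed_le hφ (hφ.comp (f ^ n).continuous)

theorem closure_minimalSetMinimizers_subset (hφ : Continuous φ) :
    closure (minimalSetMinimizers f φ) ⊆ orbitMinimizers f φ :=
  closure_minimal (fun _ ⟨_, hM, hpM, hmin⟩ n ↦ hmin (hM.isInvariant n hpM))
    (isClosed_orbitMinimizers hφ)

theorem IsMinimalSet.inter_orbitMinimizers_subset (hφc : Continuous φ) (hφi : Injective φ)
    {M : Set X} (hM : IsMinimalSet f M) {p : X} (hpM : p ∈ M) (hp : IsMinOn φ M p) :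
    M ∩ orbitMinimizers f φ ⊆ {p} := by
  rintro z ⟨hzM, hz⟩
  have hMz : M ⊆ {w | φ z ≤ φ w} := (hM.2.2.2 z hzM).trans <|
    closure_minimal (fun _ hw ↦ by obtain ⟨n, rfl⟩ := mem_orbitZ.mp hw; exact hz n)
      (isClosed_le continuous_const hφc)
  exact hφi (le_antisymm (hMz hpM) (hp hzM))

theorem IsMinimalSet.inter_closure_minimalSetMinimizers (hφc : Continuous φ)
    (hφi : Injective φ) {M : Set X} (hM : IsMinimalSet f M) {p : X} (hpM : p ∈ M)
    (hp : IsMinOn φ M p) : M ∩ closure (minimalSetMinimizers f φ) = {p} :=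
  ((inter_subset_inter_right M (closure_minimalSetMinimizers_subset hφc)).trans
    (hM.inter_orbitMinimizers_subset hφc hφi hpM hp)).antisymm
      (singleton_subset_iff.mpr ⟨hpM, subset_closure ⟨M, hM, hpM, hp⟩⟩)

variable [CompactSpace X]

theorem isMinimalBasicSet_closure_minimalSetMinimizers (hφc : Continuous φ)
    (hφi : Injective φ) : IsMinimalBasicSet f (closure (minimalSetMinimizers f φ)) := by
  refine ⟨⟨(isQuasiSection_iff isClosed_closure).mpr fun M hM ↦ ?_, fun x ↦
    (orbitZ_inter_orbitMinimizers_subsingleton hφi x).anti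
      (inter_subset_inter_right _ (closure_minimalSetMinimizers_subset hφc))⟩,
    fun A hA hAB ↦ hAB.antisymm ?_⟩
  · obtain ⟨p, hpM, hp⟩ := hM.2.1.isCompact.exists_isMinOn hM.1 hφc.continuousOn
    exact ⟨p, hpM, subset_closure ⟨M, hM, hpM, hp⟩⟩
  · refine closure_minimal (fun p ⟨M, hM, hpM, hp⟩ ↦ ?_) hA.1.1
    obtain ⟨z, hzM, hzA⟩ := hA.1.inter_nonempty hM
    have hz : z ∈ M ∩ closure (minimalSetMinimizers f φ) := ⟨hzM, hAB hzA⟩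
    rw [hM.inter_closure_minimalSetMinimizers hφc hφi hpM hp, mem_singleton_iff] at hz
    exact hz ▸ hzA

theorem interior_closure_minimalSetMinimizers (hf : DenselyAperiodic f) (hφc : Continuous φ)
    (hφi : Injective φ) : interior (closure (minimalSetMinimizers f φ)) = ∅ := by
  set V := interior (closure (minimalSetMinimizers f φ))
  by_contra hne
  obtain ⟨y, hy⟩ := nonempty_iff_ne_empty.mpr hne
  obtain ⟨p, hpV, M, hM, hpM, hp⟩ := mem_closure_iff.mp (interior_subset hy) V isOpen_interior hy
  have hMV : M ∩ V = {p} :=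
    ((inter_subset_inter_right M interior_subset).trans
      (hM.inter_closure_minimalSetMinimizers hφc hφi hpM hp).subset).antisymm
      (singleton_subset_iff.mpr ⟨hpM, hpV⟩)
  obtain ⟨n, hn, hpn⟩ := orbitZ_finite_iff.mp
    ((hM.finite_of_inter_eq_singleton isOpen_interior hMV).subset
      (hM.isInvariant.orbitZ_subset hpM))
  have hempty := hf.interior_inter_preimage_eq_empty
    (isMinimalBasicSet_closure_minimalSetMinimizers hφc hφi).1.2 hn
  exact hempty.subset ⟨hpV, by rwa [mem_preimage, hpn]⟩

end Minimizers

end Dynamics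

section Embedding

variable (X : Type*) [TopologicalSpace X] [T2Space X] [CompactSpace X] [TotallyDisconnectedSpace X]
  [SecondCountableTopology X]

theorem exists_continuous_injective_cantorSpace :
    ∃ ψ : X → ℕ → Bool, Continuous ψ ∧ Injective ψ := by
  obtain ⟨s, hs, hsc, hsb⟩ := isTopologicalBasis_isClopen.exists_countable (α := X)
  -- `∅` is added only so that the family is nonempty and can be enumerated by `ℕ`.
  obtain ⟨C, hC⟩ := (hsc.insert ∅).exists_eq_range (insert_nonempty _ _)
  have hCc : ∀ n, IsClopen (C n) := by
    intro n
    rcases (hC ▸ mem_range_self n : C n ∈ insert ∅ s) with h | h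
    · exact h ▸ isClopen_empty
    · exact hs h
  refine ⟨fun x n ↦ (C n).boolIndicator x,
    continuous_pi fun n ↦ (continuous_boolIndicator_iff_isClopen _).mpr (hCc n),
    fun x y hxy ↦ by_contra fun hne ↦ ?_⟩
  obtain ⟨v, hv, hxv, hvy⟩ := hsb.exists_subset_of_mem_open (mem_compl_singleton_iff.mpr hne)
    isOpen_compl_singleton
  obtain ⟨n, rfl⟩ : v ∈ range C := hC ▸ mem_insert_of_mem ∅ hv
  have hyv : y ∈ C n := by
    rw [mem_iff_boolIndicator] at hxv ⊢
    exact (congrFun hxy n).symm.trans hxv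
  exact hvy hyv rfl

theorem exists_continuous_injective_real : ∃ φ : X → ℝ, Continuous φ ∧ Injective φ := by
  obtain ⟨ψ, hψc, hψi⟩ := exists_continuous_injective_cantorSpace X
  exact ⟨fun x ↦ cantorSetHomeomorphNatToBool.symm (ψ x),
    continuous_subtype_val.comp (cantorSetHomeomorphNatToBool.symm.continuous.comp hψc),
    Subtype.val_injective.comp (cantorSetHomeomorphNatToBool.symm.injective.comp hψi)⟩

end Embedding

theorem stmt19_general {X : Type*} [TopologicalSpace X] [CompactSpace X] [TopologicalSpace.MetrizableSpace X] [TotallyDisconnectedSpace X] (f : X ≃ₜ X)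
    (hf : DenselyAperiodic f) :
    ∃ B : Set X, IsMinimalBasicSet f B ∧ interior B = ∅ ∧
      ∀ M : Set X, IsMinimalSet f M → ∃ p : X, M ∩ B = {p} := by
  obtain ⟨φ, hφc, hφi⟩ := exists_continuous_injective_real X
  refine ⟨closure (minimalSetMinimizers f φ),
    isMinimalBasicSet_closure_minimalSetMinimizers hφc hφi,
    interior_closure_minimalSetMinimizers hf hφc hφi, fun M hM ↦ ?_⟩
  obtain ⟨p, hpM, hp⟩ := hM.2.1.isCompact.exists_isMinOn hM.1 hφc.continuousOn
  exact ⟨p, hM.inter_closure_minimalSetMinimizers hφc hφi hpM hp⟩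

theorem stmt19 {X : Type*} [TopologicalSpace X] [CompactSpace X] [TopologicalSpace.MetrizableSpace X] [TotallyDisconnectedSpace X] [Nonempty X] (f : X ≃ₜ X)
    (hf : DenselyAperiodic f) :
    ∃ B : Set X, IsMinimalBasicSet f B ∧ interior B = ∅ ∧
      ∀ M : Set X, IsMinimalSet f M → ∃ p : X, M ∩ B = {p} :=
  stmt19_general f hf
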